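/- arXiv:2503.08851 — 3 statements merged into one kernel-verified Lean document; each statement's English description precedes it below -/
import Mathlib

section
/- If Y_1, ..., Y_k are i.i.d. exponential with rate λ > 0 and K is an independent geometric random variable on {1,2,...} with parameter p ∈ (0,1), then E[∑_{j=1}^K Y_j · (∑_{l=1}^{j-1} v^2 Y_l^2)] = 2v^2(1-p)/(p^2 λ^3). -/
open MeasureTheory ProbabilityTheory

section aux
open Real Set

lemma exp_moment {lam : ℝ} (hlam : 0 < lam) (n : ℕ) :
    ∫⁻ x, ENNReal.ofReal (x ^ n) ∂(expMeasure lam) = ENNReal.ofReal ((Nat.factorial n : ℝ) / lam ^ n) := by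
  have hpdf : Measurable (exponentialPDF lam) :=
    (measurable_exponentialPDFReal lam).ennreal_ofReal
  have hmeas : Measurable (fun x : ℝ => ENNReal.ofReal (x ^ n)) := by fun_prop
  have hexp : expMeasure lam = volume.withDensity (exponentialPDF lam) := rfl
  rw [hexp, lintegral_withDensity_eq_lintegral_mul _ hpdf hmeas]
  have hsplit := (lintegral_add_compl (fun x => (exponentialPDF lam * fun x => ENNReal.ofReal (x ^ n)) x) (measurableSet_Iio (a := (0:ℝ))) (μ := volume)).symm
  rw [compl_Iio] at hsplit
  rw [hsplit]
  have h1 : ∫⁻ x in Iio 0, (exponentialPDF lam * fun x => ENNReal.ofReal (x ^ n)) x = 0 := by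
    rw [setLIntegral_congr_fun measurableSet_Iio (fun ⦃x⦄ (hx : x < 0) => ?_), lintegral_zero]
    simp [Pi.mul_apply, exponentialPDF_of_neg hx]
  have h2 : ∫⁻ x in Ici 0, (exponentialPDF lam * fun x => ENNReal.ofReal (x ^ n)) x
      = ∫⁻ x in Ici 0, ENNReal.ofReal (lam * rexp (-(lam * x)) * x ^ n) := by
    refine setLIntegral_congr_fun measurableSet_Ici (fun ⦃x⦄ (hx : 0 ≤ x) => ?_)
    rw [Pi.mul_apply, exponentialPDF_of_nonneg hx, ← ENNReal.ofReal_mul (by positivity)]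
  have hInt : IntegrableOn (fun x : ℝ => lam * rexp (-(lam * x)) * x ^ n) (Ici 0) := by
    rw [integrableOn_Ici_iff_integrableOn_Ioi]
    have h0 := (integrableOn_rpow_mul_exp_neg_mul_rpow (p := 1) (s := (n:ℝ)) (b := lam)
      (lt_of_lt_of_le neg_one_lt_zero (Nat.cast_nonneg n)) zero_lt_one hlam).const_mul lam
    refine IntegrableOn.congr_fun h0 (fun x hx => ?_) measurableSet_Ioi
    have hx0 : (0:ℝ) < x := hx
    rw [Real.rpow_one, Real.rpow_natCast]
    ring
  have h3 : ∫⁻ x in Ici 0, ENNReal.ofReal (lam * rexp (-(lam * x)) * x ^ n)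
      = ENNReal.ofReal (∫ x in Ici 0, lam * rexp (-(lam * x)) * x ^ n) := by
    rw [← ofReal_integral_eq_lintegral_ofReal hInt]
    exact ae_restrict_of_forall_mem measurableSet_Ici (fun x hx => mul_nonneg (by positivity) (pow_nonneg hx n))
  have h4 : ∫ x in Ici 0, lam * rexp (-(lam * x)) * x ^ n = (Nat.factorial n : ℝ) / lam ^ n := by
    rw [MeasureTheory.integral_Ici_eq_integral_Ioi]
    have : ∫ x in Ioi (0:ℝ), lam * rexp (-(lam * x)) * x ^ n
        = lam * ∫ x in Ioi (0:ℝ), x ^ ((n + 1 : ℝ) - 1) * rexp (-(lam * x)) := by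
      rw [← integral_const_mul]
      refine setIntegral_congr_fun measurableSet_Ioi (fun x hx => ?_)
      have hx0 : (0:ℝ) < x := hx
      rw [show (n + 1 : ℝ) - 1 = (n:ℝ) by ring, Real.rpow_natCast]
      ring
    rw [this, integral_rpow_mul_exp_neg_mul_Ioi (by positivity) hlam]
    rw [show ((n:ℝ) + 1) = ((n + 1 : ℕ) : ℝ) by push_cast; ring, Real.rpow_natCast,
      Nat.cast_add, Nat.cast_one, Real.Gamma_nat_eq_factorial]
    field_simp
    rw [mul_right_comm, ← pow_succ', one_div, inv_pow, mul_inv_cancel₀ (pow_ne_zero _ hlam.ne')]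
  rw [h1, h2, h3, h4, zero_add]

lemma Y_ae_nonneg {Ω : Type*} [MeasureSpace Ω] {lam : ℝ} {X : Ω → ℝ}
    (hm : Measurable X) (hd : Measure.map X ℙ = expMeasure lam) :
    ∀ᵐ ω ∂(ℙ : Measure Ω), 0 ≤ X ω := by
  rw [MeasureTheory.ae_iff]
  have h : {ω | ¬ 0 ≤ X ω} = X ⁻¹' (Iio 0) := by ext ω; simp [not_le]
  rw [h, ← Measure.map_apply hm measurableSet_Iio, hd]
  show (volume.withDensity (exponentialPDF lam)) (Iio 0) = 0
  rw [withDensity_apply _ measurableSet_Iio]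
  exact lintegral_exponentialPDF_of_nonpos le_rfl

end aux

set_option maxHeartbeats 1000000 in
/-- With `Y_j` i.i.d. `Exp(lam)`, `K` independent geometric on `{1,2,...}` with parameter
`p ∈ (0,1)`: `E[∑_{j=1}^K Y_j (∑_{l=1}^{j-1} v² Y_l²)] = 2 v² (1-p) / (p² lam³)`. -/
theorem stmt_5 {Ω : Type*} [MeasureSpace Ω] [IsProbabilityMeasure (ℙ : Measure Ω)]
    (lam p v : ℝ) (hlam : 0 < lam) (hp : p ∈ Set.Ioo (0 : ℝ) 1)
    (Y : ℕ → Ω → ℝ) (K : Ω → ℕ)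
    (hYmeas : ∀ j, Measurable (Y j)) (hKmeas : Measurable K)
    (hYdist : ∀ j, Measure.map (Y j) ℙ = expMeasure lam)
    (hYindep : iIndepFun Y ℙ)
    (hKindep : IndepFun K (fun ω j => Y j ω) ℙ)
    (hK : ∀ k : ℕ, 1 ≤ k → ℙ {ω | K ω = k} = ENNReal.ofReal (p * (1 - p) ^ (k - 1))) :
    (∫ ω, ∑ j ∈ Finset.Icc 1 (K ω),
        Y j ω * (∑ l ∈ Finset.Icc 1 (j - 1), v ^ 2 * (Y l ω) ^ 2) ∂ℙ)
      = 2 * v ^ 2 * (1 - p) / (p ^ 2 * lam ^ 3) := by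
  obtain ⟨hp0, hp1⟩ := hp
  have hq0 : 0 < 1 - p := by linarith
  have hq1 : 1 - p < 1 := by linarith
  set q : ℝ := 1 - p with hqdef
  -- notation
  set f : ℕ → Ω → ℝ := fun k ω => ∑ j ∈ Finset.Icc 1 k,
      Y j ω * (∑ l ∈ Finset.Icc 1 (j - 1), v ^ 2 * (Y l ω) ^ 2) with hf
  set G : ℕ → (ℕ → ℝ) → ENNReal := fun k y => ∑ j ∈ Finset.Icc 1 k,
      ENNReal.ofReal (y j) *
        (ENNReal.ofReal (v ^ 2) * ∑ l ∈ Finset.Icc 1 (j - 1), ENNReal.ofReal ((y l) ^ 2))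
    with hG
  set F : ℕ → Ω → ENNReal := fun k ω => G k (fun j => Y j ω) with hF
  have hfmeas : ∀ k, Measurable (f k) := by
    intro k
    exact Finset.measurable_sum _ fun j _ => (hYmeas j).mul
      (Finset.measurable_sum _ fun l _ => measurable_const.mul ((hYmeas l).pow_const 2))
  have hGmeas : ∀ k, Measurable (G k) := by
    intro k
    refine Finset.measurable_sum _ fun j _ => Measurable.mul ?_ (Measurable.const_mul
      (Finset.measurable_sum _ fun l _ => ?_) _)
    · exact (measurable_pi_apply j).ennreal_ofReal
    · exact ((measurable_pi_apply l).pow_const 2).ennreal_ofReal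
  have hYvec : Measurable (fun ω => (fun j => Y j ω)) := measurable_pi_lambda _ hYmeas
  have hFmeas : ∀ k, Measurable (F k) := fun k => (hGmeas k).comp hYvec
  have hae : ∀ᵐ ω ∂(ℙ : Measure Ω), ∀ j, 0 ≤ Y j ω :=
    MeasureTheory.ae_all_iff.2 fun j => Y_ae_nonneg (hYmeas j) (hYdist j)
  -- pointwise conversion to ENNReal
  have hconv : ∀ᵐ ω ∂(ℙ : Measure Ω), ∀ k, ENNReal.ofReal (f k ω) = F k ω := by
    filter_upwards [hae] with ω hω k
    simp only [hf, hF, hG]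
    rw [ENNReal.ofReal_sum_of_nonneg (fun j _ => mul_nonneg (hω j)
      (Finset.sum_nonneg fun l _ => mul_nonneg (sq_nonneg v) (sq_nonneg _)))]
    refine Finset.sum_congr rfl fun j _ => ?_
    rw [ENNReal.ofReal_mul (hω j)]
    congr 1
    rw [ENNReal.ofReal_sum_of_nonneg (fun l _ => mul_nonneg (sq_nonneg v) (sq_nonneg _)),
      Finset.mul_sum]
    exact Finset.sum_congr rfl fun l _ => ENNReal.ofReal_mul (sq_nonneg v)
  -- measurability of the main integrand
  have hmeasmain : Measurable (fun ω => f (K ω) ω) := by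
    have : Measurable (fun kw : Ω × ℕ => f kw.2 kw.1) :=
      measurable_from_prod_countable_left fun k => hfmeas k
    exact this.comp (measurable_id.prodMk hKmeas)
  have hnn : 0 ≤ᵐ[(ℙ : Measure Ω)] fun ω => f (K ω) ω := by
    filter_upwards [hae] with ω hω
    exact Finset.sum_nonneg fun j _ => mul_nonneg (hω j)
      (Finset.sum_nonneg fun l _ => mul_nonneg (sq_nonneg v) (sq_nonneg _))
  have hstart : (∫ ω, ∑ j ∈ Finset.Icc 1 (K ω),
        Y j ω * (∑ l ∈ Finset.Icc 1 (j - 1), v ^ 2 * (Y l ω) ^ 2) ∂ℙ)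
      = (∫⁻ ω, ENNReal.ofReal (f (K ω) ω) ∂ℙ).toReal :=
    integral_eq_lintegral_of_nonneg_ae hnn hmeasmain.aestronglyMeasurable
  have hL1 : ∫⁻ ω, ENNReal.ofReal (f (K ω) ω) ∂ℙ = ∫⁻ ω, F (K ω) ω ∂ℙ :=
    lintegral_congr_ae (by filter_upwards [hconv] with ω h; exact h (K ω))
  -- partition over values of K
  have hsets : ∀ k : ℕ, MeasurableSet {ω | K ω = k} := fun k => hKmeas (measurableSet_singleton k)
  have hL2 : ∫⁻ ω, F (K ω) ω ∂ℙ = ∑' k, ∫⁻ ω in {ω | K ω = k}, F (K ω) ω ∂ℙ := by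
    have hunion : (⋃ k, {ω | K ω = k}) = Set.univ := by ext ω; simp
    have hdisj : Pairwise (Function.onFun Disjoint fun k => {ω | K ω = k}) := by
      intro i j hij
      simp only [Function.onFun, Set.disjoint_left]
      rintro ω (h1 : K ω = i) (h2 : K ω = j)
      exact hij (h1 ▸ h2 ▸ rfl)
    conv_lhs => rw [← setLIntegral_univ, ← hunion]
    exact lintegral_iUnion hsets hdisj _
  have hL3 : ∀ k, ∫⁻ ω in {ω | K ω = k}, F (K ω) ω ∂ℙ = ∫⁻ ω in {ω | K ω = k}, F k ω ∂ℙ :=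
    fun k => setLIntegral_congr_fun (hsets k)
      (fun ⦃ω⦄ (hω : K ω = k) => by rw [hω])
  -- independence of K and F k
  have hkey : ∀ k, ∫⁻ ω in {ω | K ω = k}, F k ω ∂ℙ = ℙ {ω | K ω = k} * ∫⁻ ω, F k ω ∂ℙ := by
    intro k
    set φ : ℕ → ENNReal := fun n => if n = k then 1 else 0 with hφ
    have hφmeas : Measurable φ := measurable_of_countable φ
    have hind : IndepFun (fun ω => φ (K ω)) (F k) ℙ := hKindep.comp hφmeas (hGmeas k)
    have h3 : ∫⁻ ω in {ω | K ω = k}, F k ω ∂ℙ = ∫⁻ ω, φ (K ω) * F k ω ∂ℙ := by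
      rw [← lintegral_indicator (hsets k)]
      refine lintegral_congr fun ω => ?_
      by_cases h : K ω = k <;> simp [Set.indicator, hφ, h]
    rw [h3, lintegral_mul_eq_lintegral_mul_lintegral_of_indepFun''
      (f := fun ω => φ (K ω)) (g := F k)
      ((hφmeas.comp hKmeas).aemeasurable) ((hFmeas k).aemeasurable) hind]
    congr 1
    have h5 : (fun ω => φ (K ω)) = Set.indicator {ω | K ω = k} 1 := by
      ext ω; by_cases h : K ω = k <;> simp [Set.indicator, hφ, h]
    rw [h5, lintegral_indicator_one (hsets k)]
  -- moments
  have hM1 : ∀ j, ∫⁻ ω, ENNReal.ofReal (Y j ω) ∂ℙ = ENNReal.ofReal (1 / lam) := by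
    intro j
    have h0 : ∫⁻ ω, ENNReal.ofReal (Y j ω) ∂ℙ
        = ∫⁻ x, ENNReal.ofReal (x ^ 1) ∂(Measure.map (Y j) ℙ) := by
      rw [lintegral_map (by fun_prop) (hYmeas j)]; simp
    rw [h0, hYdist j, exp_moment hlam 1]
    norm_num [Nat.factorial]
  have hM2 : ∀ l, ∫⁻ ω, ENNReal.ofReal ((Y l ω) ^ 2) ∂ℙ = ENNReal.ofReal (2 / lam ^ 2) := by
    intro l
    have h0 : ∫⁻ ω, ENNReal.ofReal ((Y l ω) ^ 2) ∂ℙ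
        = ∫⁻ x, ENNReal.ofReal (x ^ 2) ∂(Measure.map (Y l) ℙ) := by
      rw [lintegral_map (by fun_prop) (hYmeas l)]
    rw [h0, hYdist l, exp_moment hlam 2]
    norm_num [Nat.factorial]
  have hprod : ∀ j l, l ≠ j →
      ∫⁻ ω, ENNReal.ofReal (Y j ω) * ENNReal.ofReal ((Y l ω) ^ 2) ∂ℙ
        = ENNReal.ofReal (1 / lam) * ENNReal.ofReal (2 / lam ^ 2) := by
    intro j l hlj
    have hind : IndepFun (fun ω => ENNReal.ofReal (Y j ω))
        (fun ω => ENNReal.ofReal ((Y l ω) ^ 2)) ℙ := by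
      have h0 := hYindep.indepFun (Ne.symm hlj)
      exact h0.comp ENNReal.measurable_ofReal ((measurable_id.pow_const 2).ennreal_ofReal)
    rw [lintegral_mul_eq_lintegral_mul_lintegral_of_indepFun''
      ((hYmeas j).ennreal_ofReal.aemeasurable)
      (((hYmeas l).pow_const 2).ennreal_ofReal.aemeasurable) hind, hM1 j, hM2 l]
  -- value of E[F k]
  set C : ℕ → ℕ := fun k => ∑ j ∈ Finset.Icc 1 k, (j - 1) with hCdef
  set D : ENNReal := ENNReal.ofReal (v ^ 2) *
      (ENNReal.ofReal (1 / lam) * ENNReal.ofReal (2 / lam ^ 2)) with hDdef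
  have hFk : ∀ k, ∫⁻ ω, F k ω ∂ℙ = (C k : ENNReal) * D := by
    intro k
    have hmeas_term : ∀ j : ℕ, Measurable (fun ω => ENNReal.ofReal (Y j ω) *
        (ENNReal.ofReal (v ^ 2) * ∑ l ∈ Finset.Icc 1 (j - 1), ENNReal.ofReal ((Y l ω) ^ 2))) :=
      fun j => ((hYmeas j).ennreal_ofReal).mul
        ((Finset.measurable_sum _ fun l _ =>
          ((hYmeas l).pow_const 2).ennreal_ofReal).const_mul _)
    simp only [hF, hG]
    rw [lintegral_finset_sum _ (fun j _ => hmeas_term j)]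
    have hterm : ∀ j ∈ Finset.Icc 1 k,
        ∫⁻ ω, ENNReal.ofReal (Y j ω) *
          (ENNReal.ofReal (v ^ 2) * ∑ l ∈ Finset.Icc 1 (j - 1), ENNReal.ofReal ((Y l ω) ^ 2)) ∂ℙ
        = ((j - 1 : ℕ) : ENNReal) * D := by
      intro j hj
      have hrw : ∀ ω, ENNReal.ofReal (Y j ω) *
          (ENNReal.ofReal (v ^ 2) * ∑ l ∈ Finset.Icc 1 (j - 1), ENNReal.ofReal ((Y l ω) ^ 2))
          = ∑ l ∈ Finset.Icc 1 (j - 1), ENNReal.ofReal (v ^ 2) *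
              (ENNReal.ofReal (Y j ω) * ENNReal.ofReal ((Y l ω) ^ 2)) := by
        intro ω
        rw [Finset.mul_sum, Finset.mul_sum]
        exact Finset.sum_congr rfl fun l _ => by ring
      simp only [hrw]
      rw [lintegral_finset_sum (f := fun l ω => ENNReal.ofReal (v ^ 2) * (ENNReal.ofReal (Y j ω) * ENNReal.ofReal ((Y l ω) ^ 2))) _ (fun l _ => ((hYmeas j).ennreal_ofReal.mul
        (((hYmeas l).pow_const 2).ennreal_ofReal)).const_mul _)]
      have hjl : ∀ l ∈ Finset.Icc 1 (j - 1), l ≠ j := by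
        intro l hl
        simp only [Finset.mem_Icc] at hl hj
        omega
      calc ∑ l ∈ Finset.Icc 1 (j - 1), ∫⁻ ω, ENNReal.ofReal (v ^ 2) *
              (ENNReal.ofReal (Y j ω) * ENNReal.ofReal ((Y l ω) ^ 2)) ∂ℙ
          = ∑ l ∈ Finset.Icc 1 (j - 1), D := by
            refine Finset.sum_congr rfl fun l hl => ?_
            rw [lintegral_const_mul (f := fun ω => ENNReal.ofReal (Y j ω) * ENNReal.ofReal ((Y l ω) ^ 2)) _ ((hYmeas j).ennreal_ofReal.mul
              (((hYmeas l).pow_const 2).ennreal_ofReal)), hprod j l (hjl l hl), hDdef]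
        _ = ((j - 1 : ℕ) : ENNReal) * D := by
            rw [Finset.sum_const, Nat.card_Icc]
            simp [nsmul_eq_mul]
    rw [Finset.sum_congr rfl hterm, ← Finset.sum_mul, hCdef]
    norm_cast
  -- the series
  set A : ℝ := v ^ 2 * ((1 / lam) * (2 / lam ^ 2)) with hAdef
  have hA0 : 0 ≤ A := by positivity
  set u : ℕ → ℝ := fun k => (p * A) * ((C k : ℝ) * q ^ (k - 1)) with hudef
  have hu0 : ∀ k, 0 ≤ u k := fun k => by positivity
  have hDofReal : D = ENNReal.ofReal A := by
    rw [hDdef, hAdef, ENNReal.ofReal_mul (sq_nonneg v), ENNReal.ofReal_mul (by positivity)]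
  have hterm : ∀ k, ℙ {ω | K ω = k} * ((C k : ENNReal) * D) = ENNReal.ofReal (u k) := by
    intro k
    rcases Nat.eq_zero_or_pos k with rfl | hk
    · have hC0 : C 0 = 0 := by simp [hCdef]
      simp [hC0, hudef]
    · rw [hK k hk, hDofReal, ← ENNReal.ofReal_natCast (C k),
        ← ENNReal.ofReal_mul (Nat.cast_nonneg _), ← ENNReal.ofReal_mul (by positivity)]
      congr 1
      rw [hudef]
      ring
  -- closed form for C
  have hC : ∀ m, C m = m.choose 2 := by
    intro m
    induction m with
    | zero => simp [hCdef]
    | succ m ih =>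
      simp only [hCdef] at ih ⊢
      rw [Finset.sum_Icc_succ_top (by omega : 1 ≤ m + 1), ih]
      have h6 : (m + 1).choose 2 = m.choose 1 + m.choose 2 := Nat.choose_succ_succ m 1
      rw [h6, Nat.choose_one_right]
      omega
  -- summability and value of the series
  have hqnorm : ‖q‖ < 1 := by rw [Real.norm_eq_abs, abs_lt]; constructor <;> linarith
  have hsum0 : Summable (fun n : ℕ => ((n + 2).choose 2 : ℝ) * q ^ n) :=
    summable_choose_mul_geometric_of_norm_lt_one 2 hqnorm
  have hw2 : ∀ n : ℕ, (C (n + 2) : ℝ) * q ^ (n + 2 - 1) = q * (((n + 2).choose 2 : ℝ) * q ^ n) := by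
    intro n
    rw [hC (n + 2), show n + 2 - 1 = n + 1 from rfl, pow_succ]
    ring
  have hsumw : Summable (fun k => (C k : ℝ) * q ^ (k - 1)) := by
    rw [← summable_nat_add_iff 2]
    refine Summable.congr (hsum0.mul_left q) fun n => ?_
    exact (hw2 n).symm
  have hsumu : Summable u := hsumw.mul_left (p * A)
  have hwval : ∑' k, (C k : ℝ) * q ^ (k - 1) = q / p ^ 3 := by
    have hsum1 : Summable (fun n : ℕ => (C (n + 1) : ℝ) * q ^ (n + 1 - 1)) :=
      (summable_nat_add_iff 1).2 hsumw
    rw [Summable.tsum_eq_zero_add hsumw, Summable.tsum_eq_zero_add hsum1]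
    have h2 : ∑' n : ℕ, (C (n + 1 + 1) : ℝ) * q ^ (n + 1 + 1 - 1)
        = q * (1 / (1 - q) ^ (2 + 1)) := by
      rw [← tsum_choose_mul_geometric_of_norm_lt_one 2 hqnorm, ← tsum_mul_left]
      exact tsum_congr fun n => hw2 n
    rw [h2, show (1 : ℝ) - q = p from by rw [hqdef]; ring]
    have hc0 : C 0 = 0 := by simp [hCdef]
    have hc1 : C 1 = 0 := by simp [hCdef]
    rw [hc0, hc1]
    push_cast
    ring
  have huval : ∑' k, u k = (p * A) * (q / p ^ 3) := by
    rw [hudef, tsum_mul_left, hwval]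
  -- assemble
  rw [hstart, hL1, hL2]
  have : ∑' k, ∫⁻ ω in {ω | K ω = k}, F (K ω) ω ∂ℙ = ENNReal.ofReal (∑' k, u k) := by
    rw [ENNReal.ofReal_tsum_of_nonneg hu0 hsumu]
    refine tsum_congr fun k => ?_
    rw [hL3 k, hkey k, hFk k, hterm k]
  rw [this, ENNReal.toReal_ofReal (tsum_nonneg hu0), huval, hAdef, hqdef]
  field_simp
end

section
/- Theorem (D/D/1 AoP): For an agent with speed v following the RWP model with deterministic hop interval D_a, polling probability p ∈ (0,1), and deterministic service time D_s < D_a, the expected per-update area satisfies E[Q_i] = E[G_1] + E[G_2] + E[G_3] = v^2 D_a^3/(3p) + v^2 D_a^3 (1-p)/p^2 + v^2 D_a^2 D_s/p. -/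
open MeasureTheory ProbabilityTheory

lemma sum_Icc_pred (k : ℕ) : ∑ j ∈ Finset.Icc 1 k, (j - 1) = k.choose 2 := by
  induction k with
  | zero => simp
  | succ n ih =>
      rw [Finset.sum_Icc_succ_top (by omega), ih]
      simp [Nat.choose_succ_succ, Nat.choose_one_right]
      omega

/-- Theorem 2 (D/D/1 AoP): with deterministic hop interval `D_a`, polling probability
`p ∈ (0,1)`, deterministic service time `D_s < D_a` (so no waiting), speed `v`, and
`K` geometric on `{1,2,...}`:
`E[Q_i] = E[G_1] + E[G_2] + E[G_3]
 = v² D_a³/(3p) + v² D_a³ (1-p)/p² + v² D_a² D_s/p`. -/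
theorem stmt_13 {Ω : Type*} [MeasureSpace Ω] [IsProbabilityMeasure (ℙ : Measure Ω)]
    (Da Ds p v : ℝ) (hDa : 0 < Da) (hDs : 0 < Ds) (hDsDa : Ds < Da) (hv : 0 < v)
    (hp : p ∈ Set.Ioo (0 : ℝ) 1)
    (K : Ω → ℕ) (hKmeas : Measurable K)
    (hK : ∀ k : ℕ, 1 ≤ k → ℙ {ω | K ω = k} = ENNReal.ofReal (p * (1 - p) ^ (k - 1))) :
    (∫ ω, ((v ^ 2 / 3) * ∑ _j ∈ Finset.Icc 1 (K ω), Da ^ 3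
        + (∑ j ∈ Finset.Icc 1 (K ω),
            Da * (∑ _l ∈ Finset.Icc 1 (j - 1), v ^ 2 * Da ^ 2))
        + (∑ _j ∈ Finset.Icc 1 (K ω), v ^ 2 * Da ^ 2) * Ds) ∂ℙ)
      = v ^ 2 * Da ^ 3 / (3 * p) + v ^ 2 * Da ^ 3 * (1 - p) / p ^ 2
        + v ^ 2 * Da ^ 2 * Ds / p := by
  obtain ⟨hp0, hp1⟩ := hp
  set q : ℝ := 1 - p with hqdef
  have hq0 : 0 < q := by simp [hqdef]; linarith
  have hq1 : q < 1 := by simp [hqdef]; linarith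
  have hqnorm : ‖q‖ < 1 := by rw [Real.norm_eq_abs, abs_of_pos hq0]; exact hq1
  have hpq : 1 - q = p := by simp [hqdef]
  set a : ℝ := v ^ 2 * Da ^ 3 / 3 + v ^ 2 * Da ^ 2 * Ds with hadef
  set b : ℝ := v ^ 2 * Da ^ 3 with hbdef
  have ha0 : 0 ≤ a := by positivity
  have hb0 : 0 ≤ b := by positivity
  set g : ℕ → ℝ := fun k => a * k + b * (k.choose 2) with hgdef
  -- closed form of the integrand
  have hg : ∀ k : ℕ, (v ^ 2 / 3) * ∑ _j ∈ Finset.Icc 1 k, Da ^ 3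
        + (∑ j ∈ Finset.Icc 1 k,
            Da * (∑ _l ∈ Finset.Icc 1 (j - 1), v ^ 2 * Da ^ 2))
        + (∑ _j ∈ Finset.Icc 1 k, v ^ 2 * Da ^ 2) * Ds = g k := by
    intro k
    have hmid : ∑ j ∈ Finset.Icc 1 k, Da * (∑ _l ∈ Finset.Icc 1 (j - 1), v ^ 2 * Da ^ 2)
        = (k.choose 2 : ℝ) * (Da * (v ^ 2 * Da ^ 2)) := by
      have h1 : ∀ j ∈ Finset.Icc 1 k,
          Da * (∑ _l ∈ Finset.Icc 1 (j - 1), v ^ 2 * Da ^ 2)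
            = ((j - 1 : ℕ) : ℝ) * (Da * (v ^ 2 * Da ^ 2)) := by
        intro j _
        rw [Finset.sum_const, Nat.card_Icc, Nat.add_sub_cancel, nsmul_eq_mul]
        ring
      rw [Finset.sum_congr rfl h1, ← Finset.sum_mul, ← Nat.cast_sum, sum_Icc_pred]
    rw [hmid]
    simp only [Finset.sum_const, Nat.card_Icc, Nat.add_sub_cancel, nsmul_eq_mul, hgdef,
      hadef, hbdef]
    ring
  have hg0 : g 0 = 0 := by simp [hgdef]
  have hgnonneg : ∀ k, 0 ≤ g k := fun k => by
    have : (0:ℝ) ≤ (k:ℝ) := Nat.cast_nonneg k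
    have : (0:ℝ) ≤ (k.choose 2 : ℝ) := Nat.cast_nonneg _
    positivity
  set S : ℕ → ℝ := fun n => (p / q) * (g n * q ^ n) with hSdef
  -- key HasSum facts
  have h1 : HasSum (fun n : ℕ => a * ((n : ℝ) * q ^ n)) (a * (q / (1 - q) ^ 2)) :=
    (hasSum_coe_mul_geometric_of_norm_lt_one hqnorm).mul_left a
  have h2' : HasSum (fun n : ℕ => (((n + 2).choose 2 : ℕ) : ℝ) * q ^ n)
      (1 / (1 - q) ^ 3) := hasSum_choose_mul_geometric_of_norm_lt_one 2 hqnorm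
  have h2 : HasSum (fun n : ℕ => ((n.choose 2 : ℕ) : ℝ) * q ^ n)
      (1 / (1 - q) ^ 3 * q ^ 2) := by
    have h3 : HasSum (fun n : ℕ => (((n + 2).choose 2 : ℕ) : ℝ) * q ^ (n + 2))
        (1 / (1 - q) ^ 3 * q ^ 2) := by
      have := h2'.mul_right (q ^ 2)
      convert this using 2 with n
      · rfl
      rw [pow_add]; ring
    have := (hasSum_nat_add_iff (f := fun n : ℕ => ((n.choose 2 : ℕ) : ℝ) * q ^ n) 2).mp h3
    simpa [Finset.sum_range_succ, one_div] using this
  have h2b : HasSum (fun n : ℕ => b * (((n.choose 2 : ℕ) : ℝ) * q ^ n))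
      (b * (1 / (1 - q) ^ 3 * q ^ 2)) := h2.mul_left b
  have hgq : HasSum (fun n : ℕ => g n * q ^ n)
      (a * (q / (1 - q) ^ 2) + b * (1 / (1 - q) ^ 3 * q ^ 2)) := by
    have := h1.add h2b
    convert this using 2 with n
    simp only [hgdef]; ring
  have hShasSum : HasSum S ((p / q) *
      (a * (q / (1 - q) ^ 2) + b * (1 / (1 - q) ^ 3 * q ^ 2))) := hgq.mul_left _
  have hSval : ∀ n : ℕ, 1 ≤ n → S n = g n * (p * q ^ (n - 1)) := by
    intro n hn
    obtain ⟨m, rfl⟩ := Nat.exists_eq_add_of_le hn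
    simp only [hSdef]
    rw [show 1 + m - 1 = m from by omega, pow_add]
    field_simp
  have hSnonneg : ∀ n, 0 ≤ S n := by
    intro n
    have := hgnonneg n
    have : (0:ℝ) ≤ g n * q ^ n := by positivity
    positivity
  -- the pushforward measure
  set μ : Measure ℕ := Measure.map K ℙ with hμdef
  have hμn : ∀ n : ℕ, μ {n} = ℙ {ω | K ω = n} := by
    intro n
    rw [hμdef, Measure.map_apply hKmeas (measurableSet_singleton n)]
    rfl
  have hgmeas : Measurable g := measurable_from_nat
  -- identify the ENNReal terms
  have hterm : ∀ n : ℕ, ‖g n‖ₑ * μ {n} = ENNReal.ofReal (S n) := by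
    intro n
    rcases Nat.eq_zero_or_pos n with rfl | hn
    · simp [hg0, hSdef]
    · rw [hμn n, hK n hn, ← hpq] at *
      have hgn := hgnonneg n
      have hpqn : 0 ≤ p * q ^ (n - 1) := by positivity
      rw [hSval n hn, Real.enorm_eq_ofReal hgn, ← ENNReal.ofReal_mul hgn]
  have hint : Integrable g μ := by
    refine ⟨hgmeas.aestronglyMeasurable, ?_⟩
    rw [HasFiniteIntegral, lintegral_countable']
    have : ∑' n : ℕ, ‖g n‖ₑ * μ {n} = ∑' n, ENNReal.ofReal (S n) := by
      exact tsum_congr hterm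
    rw [this, ← ENNReal.ofReal_tsum_of_nonneg hSnonneg hShasSum.summable]
    exact ENNReal.ofReal_lt_top
  have hterm' : ∀ n : ℕ, (μ {n}).toReal • g n = S n := by
    intro n
    have := hterm n
    have hμfin : μ {n} ≠ ⊤ := measure_ne_top μ _
    rcases Nat.eq_zero_or_pos n with rfl | hn
    · simp [hg0, hSdef]
    · rw [hμn n, hK n hn]
      rw [hSval n hn, smul_eq_mul]
      rw [ENNReal.toReal_ofReal (by positivity)]
      ring
  calc (∫ ω, ((v ^ 2 / 3) * ∑ _j ∈ Finset.Icc 1 (K ω), Da ^ 3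
        + (∑ j ∈ Finset.Icc 1 (K ω),
            Da * (∑ _l ∈ Finset.Icc 1 (j - 1), v ^ 2 * Da ^ 2))
        + (∑ _j ∈ Finset.Icc 1 (K ω), v ^ 2 * Da ^ 2) * Ds) ∂ℙ)
      = ∫ ω, g (K ω) ∂ℙ := by
        apply integral_congr_ae
        filter_upwards with ω
        exact hg (K ω)
    _ = ∫ n, g n ∂μ := (integral_map hKmeas.aemeasurable hgmeas.aestronglyMeasurable).symm
    _ = ∑' n, (μ {n}).toReal • g n := integral_countable' hint
    _ = ∑' n, S n := tsum_congr hterm'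
    _ = (p / q) * (a * (q / (1 - q) ^ 2) + b * (1 / (1 - q) ^ 3 * q ^ 2)) :=
        hShasSum.tsum_eq
    _ = v ^ 2 * Da ^ 3 / (3 * p) + v ^ 2 * Da ^ 3 * (1 - p) / p ^ 2
        + v ^ 2 * Da ^ 2 * Ds / p := by
        rw [hpq, hadef, hbdef, hqdef]
        field_simp
        ring
end

section
/- For an agent with position estimate p̂_n = p̂_o + c ∑_{i=1}^h v δ_i (cos θ̂_i, sin θ̂_i) and true position p_n = p_o + ∑_{i=1}^h v δ_i (cos θ_i, sin θ_i), where θ̂_i = θ_i + Δ_i with Δ_i ~ Unif(-ε, ε) independent of everything else and θ_i ~ Unif(0, 2π] independent across hops, the trace of the mean squared error matrix equals Trace(C_o) + (1 + c^2 - 2c·E[cos Δ]) ∑_{i=1}^h v^2 δ_i^2. -/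
open MeasureTheory ProbabilityTheory Real

/-- Index type for the joint independence of the hop directions `θ_i`, the sensor
errors `Δ_i`, and the initial estimation error vector. -/
def AoPIndexType : (ℕ ⊕ ℕ) ⊕ Unit → Type
  | Sum.inl _ => ℝ
  | Sum.inr _ => ℝ × ℝ

instance (i : (ℕ ⊕ ℕ) ⊕ Unit) : MeasurableSpace (AoPIndexType i) :=
  match i with
  | Sum.inl _ => inferInstanceAs (MeasurableSpace ℝ)
  | Sum.inr _ => inferInstanceAs (MeasurableSpace (ℝ × ℝ))

section Aux

lemma aop_abs_le_sq_add_one (x : ℝ) : ‖x‖ ≤ x ^ 2 + 1 := by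
  rw [Real.norm_eq_abs]
  nlinarith [sq_nonneg (|x| - 1), abs_nonneg x, sq_abs x]

lemma aop_diag (c t d : ℝ) :
    (Real.cos t - c * Real.cos (t + d)) ^ 2 + (Real.sin t - c * Real.sin (t + d)) ^ 2
      = 1 + c ^ 2 - 2 * c * Real.cos d := by
  have h1 := Real.sin_sq_add_cos_sq t
  have h2 := Real.sin_sq_add_cos_sq (t + d)
  have h3 : Real.cos d = Real.cos (t + d) * Real.cos t + Real.sin (t + d) * Real.sin t := by
    rw [← Real.cos_sub]; ring_nf
  linear_combination h1 + c ^ 2 * h2 + 2 * c * h3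

lemma aop_expand (A B : ℝ) (s : Finset ℕ) (a X Y : ℕ → ℝ) :
    (A + ∑ i ∈ s, a i * X i) ^ 2 + (B + ∑ i ∈ s, a i * Y i) ^ 2
      = (A ^ 2 + B ^ 2) + (∑ i ∈ s, ∑ j ∈ s, (a i * a j) * (X i * X j + Y i * Y j))
        + (∑ i ∈ s, (2 * a i) * (X i * A + Y i * B)) := by
  have e1 : (∑ i ∈ s, a i * X i) ^ 2 = ∑ i ∈ s, ∑ j ∈ s, (a i * X i) * (a j * X j) := by
    rw [sq, Finset.sum_mul_sum]
  have e2 : (∑ i ∈ s, a i * Y i) ^ 2 = ∑ i ∈ s, ∑ j ∈ s, (a i * Y i) * (a j * Y j) := by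
    rw [sq, Finset.sum_mul_sum]
  have e3 : ∑ i ∈ s, ∑ j ∈ s, (a i * a j) * (X i * X j + Y i * Y j)
      = (∑ i ∈ s, ∑ j ∈ s, (a i * X i) * (a j * X j))
        + ∑ i ∈ s, ∑ j ∈ s, (a i * Y i) * (a j * Y j) := by
    rw [← Finset.sum_add_distrib]
    exact Finset.sum_congr rfl fun i _ => by
      rw [← Finset.sum_add_distrib]
      exact Finset.sum_congr rfl fun j _ => by ring
  have e4 : ∑ i ∈ s, (2 * a i) * (X i * A + Y i * B)
      = 2 * A * (∑ i ∈ s, a i * X i) + 2 * B * (∑ i ∈ s, a i * Y i) := by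
    rw [Finset.mul_sum, Finset.mul_sum, ← Finset.sum_add_distrib]
    exact Finset.sum_congr rfl fun i _ => by ring
  calc (A + ∑ i ∈ s, a i * X i) ^ 2 + (B + ∑ i ∈ s, a i * Y i) ^ 2
      = (A ^ 2 + B ^ 2) + ((∑ i ∈ s, a i * X i) ^ 2 + (∑ i ∈ s, a i * Y i) ^ 2)
        + (2 * A * (∑ i ∈ s, a i * X i) + 2 * B * (∑ i ∈ s, a i * Y i)) := by ring
    _ = _ := by rw [e1, e2, ← e3, ← e4]

lemma aop_bdd_integrable {Ω : Type*} [MeasureSpace Ω] [IsProbabilityMeasure (ℙ : Measure Ω)]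
    {f : Ω → ℝ} (hf : AEStronglyMeasurable f ℙ) {C : ℝ} (h : ∀ ω, ‖f ω‖ ≤ C) :
    Integrable f ℙ :=
  (integrable_const C).mono' hf (ae_of_all _ h)

end Aux

/-- PEB decomposition: with true position `p_n = p_o + ∑_{i=1}^h v δ_i (cos θ_i, sin θ_i)`,
estimate `p̂_n = p̂_o + c ∑_{i=1}^h v δ_i (cos (θ_i + Δ_i), sin (θ_i + Δ_i))`,
`θ_i ~ Unif(0, 2π]` i.i.d., `Δ_i ~ Unif(-ε,ε)`, all independent of each other and of the
initial estimation error `err = p_o - p̂_o`, the trace of the MSE matrix equals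
`Trace(C_o) + (1 + c² - 2 c E[cos Δ]) ∑_{i=1}^h v² δ_i²`. -/
theorem stmt_17 {Ω : Type*} [MeasureSpace Ω] [IsProbabilityMeasure (ℙ : Measure Ω)]
    (v ε c : ℝ) (hc : c = 0 ∨ c = 1) (hε : 0 < ε) (hεπ : ε ≤ π) (hv : 0 < v)
    (h : ℕ) (δ : ℕ → ℝ) (hδ : ∀ i, 0 ≤ δ i)
    (θ Δ : ℕ → Ω → ℝ) (err : Ω → ℝ × ℝ)
    (hθmeas : ∀ i, Measurable (θ i)) (hΔmeas : ∀ i, Measurable (Δ i))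
    (herrmeas : Measurable err)
    (hθdist : ∀ i, Measure.map (θ i) ℙ
      = (ENNReal.ofReal (2 * π))⁻¹ • (volume.restrict (Set.Ioc (0 : ℝ) (2 * π))))
    (hΔdist : ∀ i, Measure.map (Δ i) ℙ
      = (ENNReal.ofReal (2 * ε))⁻¹ • (volume.restrict (Set.Ioo (-ε) ε)))
    (hindep : iIndepFun
      (fun i => (match i with
        | Sum.inl (Sum.inl j) => θ j
        | Sum.inl (Sum.inr j) => Δ j
        | Sum.inr _ => err : Ω → AoPIndexType i)) ℙ)
    (hint : Integrable (fun ω => (err ω).1 ^ 2 + (err ω).2 ^ 2) ℙ) :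
    (∫ ω, (((err ω).1 + ∑ i ∈ Finset.Icc 1 h, v * δ i * Real.cos (θ i ω)
              - c * ∑ i ∈ Finset.Icc 1 h, v * δ i * Real.cos (θ i ω + Δ i ω)) ^ 2
          + ((err ω).2 + ∑ i ∈ Finset.Icc 1 h, v * δ i * Real.sin (θ i ω)
              - c * ∑ i ∈ Finset.Icc 1 h, v * δ i * Real.sin (θ i ω + Δ i ω)) ^ 2) ∂ℙ)
      = (∫ ω, ((err ω).1 ^ 2 + (err ω).2 ^ 2) ∂ℙ)
        + (1 + c ^ 2 - 2 * c * ∫ ω, Real.cos (Δ 1 ω) ∂ℙ)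
          * ∑ i ∈ Finset.Icc 1 h, v ^ 2 * (δ i) ^ 2 := by
  classical
  set s : Finset ℕ := Finset.Icc 1 h with hs
  set a : ℕ → ℝ := fun i => v * δ i with ha
  set A : Ω → ℝ := fun ω => (err ω).1 with hA
  set B : Ω → ℝ := fun ω => (err ω).2 with hB
  set X : ℕ → Ω → ℝ := fun i ω => Real.cos (θ i ω) - c * Real.cos (θ i ω + Δ i ω) with hX
  set Y : ℕ → Ω → ℝ := fun i ω => Real.sin (θ i ω) - c * Real.sin (θ i ω + Δ i ω) with hY
  -- measurability of the joint family
  have hFmeas : ∀ k, Measurable (fun ω => (match k with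
        | Sum.inl (Sum.inl j) => θ j
        | Sum.inl (Sum.inr j) => Δ j
        | Sum.inr _ => err : Ω → AoPIndexType k) ω) := by
    rintro ((k|k)|u)
    · exact hθmeas k
    · exact hΔmeas k
    · exact herrmeas
  have hAmeas : Measurable A := herrmeas.fst
  have hBmeas : Measurable B := herrmeas.snd
  have hXmeas : ∀ i, Measurable (X i) := fun i =>
    ((hθmeas i).cos).sub (((hθmeas i).add (hΔmeas i)).cos.const_mul c)
  have hYmeas : ∀ i, Measurable (Y i) := fun i =>
    ((hθmeas i).sin).sub (((hθmeas i).add (hΔmeas i)).sin.const_mul c)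
  have hXbd : ∀ i ω, ‖X i ω‖ ≤ 1 + |c| := by
    intro i ω
    calc ‖X i ω‖ ≤ ‖Real.cos (θ i ω)‖ + ‖c * Real.cos (θ i ω + Δ i ω)‖ := norm_sub_le _ _
      _ ≤ 1 + |c| * 1 := by
        rw [norm_mul]
        gcongr
        · exact Real.abs_cos_le_one _
        · exact le_of_eq (Real.norm_eq_abs c)
        · exact Real.abs_cos_le_one _
      _ = 1 + |c| := by ring
  have hYbd : ∀ i ω, ‖Y i ω‖ ≤ 1 + |c| := by
    intro i ω
    calc ‖Y i ω‖ ≤ ‖Real.sin (θ i ω)‖ + ‖c * Real.sin (θ i ω + Δ i ω)‖ := norm_sub_le _ _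
      _ ≤ 1 + |c| * 1 := by
        rw [norm_mul]
        gcongr
        · exact Real.abs_sin_le_one _
        · exact le_of_eq (Real.norm_eq_abs c)
        · exact Real.abs_sin_le_one _
      _ = 1 + |c| := by ring
  have ibd : ∀ {f : Ω → ℝ}, Measurable f → ∀ {C : ℝ}, (∀ ω, ‖f ω‖ ≤ C) → Integrable f ℙ :=
    fun hf _ hC => aop_bdd_integrable hf.aestronglyMeasurable hC
  -- integrals of cos and sin of θ i vanish
  have hθcos : ∀ i, ∫ ω, Real.cos (θ i ω) ∂ℙ = 0 := by
    intro i
    rw [← integral_map (hθmeas i).aemeasurable Real.measurable_cos.aestronglyMeasurable,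
      hθdist i, integral_smul_measure]
    have : (∫ x in Set.Ioc (0:ℝ) (2*π), Real.cos x) = 0 := by
      rw [← intervalIntegral.integral_of_le (by positivity), integral_cos]; simp
    rw [this]; simp
  have hθsin : ∀ i, ∫ ω, Real.sin (θ i ω) ∂ℙ = 0 := by
    intro i
    rw [← integral_map (hθmeas i).aemeasurable Real.measurable_sin.aestronglyMeasurable,
      hθdist i, integral_smul_measure]
    have : (∫ x in Set.Ioc (0:ℝ) (2*π), Real.sin x) = 0 := by
      rw [← intervalIntegral.integral_of_le (by positivity), integral_sin]; simp
    rw [this]; simp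
  -- all Δ i share the same cosine mean
  have hΔcos1 : ∀ i, ∫ ω, Real.cos (Δ i ω) ∂ℙ = ∫ ω, Real.cos (Δ 1 ω) ∂ℙ := by
    intro i
    rw [← integral_map (hΔmeas i).aemeasurable Real.measurable_cos.aestronglyMeasurable,
      ← integral_map (hΔmeas 1).aemeasurable Real.measurable_cos.aestronglyMeasurable,
      hΔdist i, hΔdist 1]
  -- independence facts
  have hθΔ : ∀ i, IndepFun (θ i) (Δ i) ℙ :=
    fun i => hindep.indepFun
      (show (Sum.inl (Sum.inl i) : (ℕ ⊕ ℕ) ⊕ Unit) ≠ Sum.inl (Sum.inr i) by simp)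
  have hpair_err : ∀ i, IndepFun (fun ω => (θ i ω, Δ i ω)) err ℙ := fun i =>
    hindep.indepFun_prodMk hFmeas (Sum.inl (Sum.inl i)) (Sum.inl (Sum.inr i)) (Sum.inr ())
      (by simp) (by simp)
  have hpair_pair : ∀ i j, i ≠ j →
      IndepFun (fun ω => (θ i ω, Δ i ω)) (fun ω => (θ j ω, Δ j ω)) ℙ := fun i j hij =>
    hindep.indepFun_prodMk_prodMk hFmeas (Sum.inl (Sum.inl i)) (Sum.inl (Sum.inr i))
      (Sum.inl (Sum.inl j)) (Sum.inl (Sum.inr j))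
      (by simp [hij]) (by simp) (by simp) (by simp [hij])
  -- integrability of simple pieces
  have icosθ : ∀ i, Integrable (fun ω => Real.cos (θ i ω)) ℙ :=
    fun i => ibd (Real.measurable_cos.comp (hθmeas i)) (fun ω => Real.abs_cos_le_one _)
  have isinθ : ∀ i, Integrable (fun ω => Real.sin (θ i ω)) ℙ :=
    fun i => ibd (Real.measurable_sin.comp (hθmeas i)) (fun ω => Real.abs_sin_le_one _)
  have icosΔ : ∀ i, Integrable (fun ω => Real.cos (Δ i ω)) ℙ :=
    fun i => ibd (Real.measurable_cos.comp (hΔmeas i)) (fun ω => Real.abs_cos_le_one _)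
  have icosadd : ∀ i, Integrable (fun ω => Real.cos (θ i ω + Δ i ω)) ℙ :=
    fun i => ibd (Real.measurable_cos.comp ((hθmeas i).add (hΔmeas i)))
      (fun ω => Real.abs_cos_le_one _)
  have isinadd : ∀ i, Integrable (fun ω => Real.sin (θ i ω + Δ i ω)) ℙ :=
    fun i => ibd (Real.measurable_sin.comp ((hθmeas i).add (hΔmeas i)))
      (fun ω => Real.abs_sin_le_one _)
  have iX : ∀ i, Integrable (X i) ℙ := fun i => ibd (hXmeas i) (hXbd i)
  have iY : ∀ i, Integrable (Y i) ℙ := fun i => ibd (hYmeas i) (hYbd i)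
  -- mean of cos (θ + Δ) and sin (θ + Δ) vanish
  have hone_bd : ∀ (f g : Ω → ℝ), (∀ ω, ‖f ω‖ ≤ 1) → (∀ ω, ‖g ω‖ ≤ 1) →
      ∀ ω, ‖f ω * g ω‖ ≤ 1 := by
    intro f g hf hg ω
    rw [norm_mul]
    exact mul_le_one₀ (hf ω) (norm_nonneg _) (hg ω)
  have hcosθΔ : ∀ i, ∫ ω, Real.cos (θ i ω + Δ i ω) ∂ℙ = 0 := by
    intro i
    have e : ∀ ω, Real.cos (θ i ω + Δ i ω)
        = Real.cos (θ i ω) * Real.cos (Δ i ω) - Real.sin (θ i ω) * Real.sin (Δ i ω) :=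
      fun ω => Real.cos_add _ _
    have isplit : ∫ ω, (Real.cos (θ i ω) * Real.cos (Δ i ω)
          - Real.sin (θ i ω) * Real.sin (Δ i ω)) ∂ℙ
        = (∫ ω, Real.cos (θ i ω) * Real.cos (Δ i ω) ∂ℙ)
          - ∫ ω, Real.sin (θ i ω) * Real.sin (Δ i ω) ∂ℙ :=
      integral_sub
        (ibd ((Real.measurable_cos.comp (hθmeas i)).mul (Real.measurable_cos.comp (hΔmeas i)))
          (hone_bd _ _ (fun ω => Real.abs_cos_le_one _) (fun ω => Real.abs_cos_le_one _)))
        (ibd ((Real.measurable_sin.comp (hθmeas i)).mul (Real.measurable_sin.comp (hΔmeas i)))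
          (hone_bd _ _ (fun ω => Real.abs_sin_le_one _) (fun ω => Real.abs_sin_le_one _)))
    rw [integral_congr_ae (ae_of_all _ e), isplit]
    have h1 : ∫ ω, Real.cos (θ i ω) * Real.cos (Δ i ω) ∂ℙ
        = (∫ ω, Real.cos (θ i ω) ∂ℙ) * ∫ ω, Real.cos (Δ i ω) ∂ℙ :=
      ((hθΔ i).comp Real.measurable_cos Real.measurable_cos).integral_mul_eq_mul_integral
        (Real.measurable_cos.comp (hθmeas i)).aestronglyMeasurable
        (Real.measurable_cos.comp (hΔmeas i)).aestronglyMeasurable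
    have h2 : ∫ ω, Real.sin (θ i ω) * Real.sin (Δ i ω) ∂ℙ
        = (∫ ω, Real.sin (θ i ω) ∂ℙ) * ∫ ω, Real.sin (Δ i ω) ∂ℙ :=
      ((hθΔ i).comp Real.measurable_sin Real.measurable_sin).integral_mul_eq_mul_integral
        (Real.measurable_sin.comp (hθmeas i)).aestronglyMeasurable
        (Real.measurable_sin.comp (hΔmeas i)).aestronglyMeasurable
    rw [h1, h2, hθcos i, hθsin i]; ring
  have hsinθΔ : ∀ i, ∫ ω, Real.sin (θ i ω + Δ i ω) ∂ℙ = 0 := by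
    intro i
    have e : ∀ ω, Real.sin (θ i ω + Δ i ω)
        = Real.sin (θ i ω) * Real.cos (Δ i ω) + Real.cos (θ i ω) * Real.sin (Δ i ω) :=
      fun ω => Real.sin_add _ _
    have isplit : ∫ ω, (Real.sin (θ i ω) * Real.cos (Δ i ω)
          + Real.cos (θ i ω) * Real.sin (Δ i ω)) ∂ℙ
        = (∫ ω, Real.sin (θ i ω) * Real.cos (Δ i ω) ∂ℙ)
          + ∫ ω, Real.cos (θ i ω) * Real.sin (Δ i ω) ∂ℙ :=
      integral_add
        (ibd ((Real.measurable_sin.comp (hθmeas i)).mul (Real.measurable_cos.comp (hΔmeas i)))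
          (hone_bd _ _ (fun ω => Real.abs_sin_le_one _) (fun ω => Real.abs_cos_le_one _)))
        (ibd ((Real.measurable_cos.comp (hθmeas i)).mul (Real.measurable_sin.comp (hΔmeas i)))
          (hone_bd _ _ (fun ω => Real.abs_cos_le_one _) (fun ω => Real.abs_sin_le_one _)))
    rw [integral_congr_ae (ae_of_all _ e), isplit]
    have h1 : ∫ ω, Real.sin (θ i ω) * Real.cos (Δ i ω) ∂ℙ
        = (∫ ω, Real.sin (θ i ω) ∂ℙ) * ∫ ω, Real.cos (Δ i ω) ∂ℙ :=
      ((hθΔ i).comp Real.measurable_sin Real.measurable_cos).integral_mul_eq_mul_integral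
        (Real.measurable_sin.comp (hθmeas i)).aestronglyMeasurable
        (Real.measurable_cos.comp (hΔmeas i)).aestronglyMeasurable
    have h2 : ∫ ω, Real.cos (θ i ω) * Real.sin (Δ i ω) ∂ℙ
        = (∫ ω, Real.cos (θ i ω) ∂ℙ) * ∫ ω, Real.sin (Δ i ω) ∂ℙ :=
      ((hθΔ i).comp Real.measurable_cos Real.measurable_sin).integral_mul_eq_mul_integral
        (Real.measurable_cos.comp (hθmeas i)).aestronglyMeasurable
        (Real.measurable_sin.comp (hΔmeas i)).aestronglyMeasurable
    rw [h1, h2, hθcos i, hθsin i]; ring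
  -- means of X and Y vanish
  have hEX : ∀ i, ∫ ω, X i ω ∂ℙ = 0 := by
    intro i
    have : ∫ ω, X i ω ∂ℙ = ∫ ω, (Real.cos (θ i ω) - c * Real.cos (θ i ω + Δ i ω)) ∂ℙ := rfl
    rw [this, integral_sub (icosθ i) ((icosadd i).const_mul c), integral_const_mul,
      hθcos i, hcosθΔ i]
    ring
  have hEY : ∀ i, ∫ ω, Y i ω ∂ℙ = 0 := by
    intro i
    have : ∫ ω, Y i ω ∂ℙ = ∫ ω, (Real.sin (θ i ω) - c * Real.sin (θ i ω + Δ i ω)) ∂ℙ := rfl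
    rw [this, integral_sub (isinθ i) ((isinadd i).const_mul c), integral_const_mul,
      hθsin i, hsinθΔ i]
    ring
  -- integrability of the error coordinates
  have iA : Integrable A ℙ :=
    (hint.add (integrable_const 1)).mono' hAmeas.aestronglyMeasurable
      (ae_of_all _ fun ω => le_trans (aop_abs_le_sq_add_one ((err ω).1))
        (by simp only [Pi.add_apply]; nlinarith [sq_nonneg ((err ω).2)]))
  have iB : Integrable B ℙ :=
    (hint.add (integrable_const 1)).mono' hBmeas.aestronglyMeasurable
      (ae_of_all _ fun ω => le_trans (aop_abs_le_sq_add_one ((err ω).2))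
        (by simp only [Pi.add_apply]; nlinarith [sq_nonneg ((err ω).1)]))
  -- cross terms with the error vanish
  have φXmeas : Measurable (fun p : ℝ × ℝ => Real.cos p.1 - c * Real.cos (p.1 + p.2)) := by
    fun_prop
  have φYmeas : Measurable (fun p : ℝ × ℝ => Real.sin p.1 - c * Real.sin (p.1 + p.2)) := by
    fun_prop
  have hXA : ∀ i, ∫ ω, X i ω * A ω ∂ℙ = 0 := by
    intro i
    have hI : ∫ ω, X i ω * A ω ∂ℙ = (∫ ω, X i ω ∂ℙ) * ∫ ω, A ω ∂ℙ :=
      ((hpair_err i).comp φXmeas measurable_fst).integral_mul_eq_mul_integral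
        (hXmeas i).aestronglyMeasurable hAmeas.aestronglyMeasurable
    rw [hI, hEX i, zero_mul]
  have hYB : ∀ i, ∫ ω, Y i ω * B ω ∂ℙ = 0 := by
    intro i
    have hI : ∫ ω, Y i ω * B ω ∂ℙ = (∫ ω, Y i ω ∂ℙ) * ∫ ω, B ω ∂ℙ :=
      ((hpair_err i).comp φYmeas measurable_snd).integral_mul_eq_mul_integral
        (hYmeas i).aestronglyMeasurable hBmeas.aestronglyMeasurable
    rw [hI, hEY i, zero_mul]
  have iXA : ∀ i, Integrable (fun ω => X i ω * A ω) ℙ := fun i =>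
    iA.bdd_mul (hXmeas i).aestronglyMeasurable (ae_of_all _ (hXbd i))
  have iYB : ∀ i, Integrable (fun ω => Y i ω * B ω) ℙ := fun i =>
    iB.bdd_mul (hYmeas i).aestronglyMeasurable (ae_of_all _ (hYbd i))
  have hcross : ∀ i, ∫ ω, (X i ω * A ω + Y i ω * B ω) ∂ℙ = 0 := by
    intro i
    rw [integral_add (iXA i) (iYB i), hXA i, hYB i, add_zero]
  -- off-diagonal second moments vanish
  have iXX : ∀ i j, Integrable (fun ω => X i ω * X j ω) ℙ := fun i j =>
    (iX j).bdd_mul (hXmeas i).aestronglyMeasurable (ae_of_all _ (hXbd i))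
  have iYY : ∀ i j, Integrable (fun ω => Y i ω * Y j ω) ℙ := fun i j =>
    (iY j).bdd_mul (hYmeas i).aestronglyMeasurable (ae_of_all _ (hYbd i))
  have hoff : ∀ i j, i ≠ j → ∫ ω, (X i ω * X j ω + Y i ω * Y j ω) ∂ℙ = 0 := by
    intro i j hij
    have h1 : ∫ ω, X i ω * X j ω ∂ℙ = (∫ ω, X i ω ∂ℙ) * ∫ ω, X j ω ∂ℙ :=
      ((hpair_pair i j hij).comp φXmeas φXmeas).integral_mul_eq_mul_integral
        (hXmeas i).aestronglyMeasurable (hXmeas j).aestronglyMeasurable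
    have h2 : ∫ ω, Y i ω * Y j ω ∂ℙ = (∫ ω, Y i ω ∂ℙ) * ∫ ω, Y j ω ∂ℙ :=
      ((hpair_pair i j hij).comp φYmeas φYmeas).integral_mul_eq_mul_integral
        (hYmeas i).aestronglyMeasurable (hYmeas j).aestronglyMeasurable
    rw [integral_add (iXX i j) (iYY i j), h1, h2, hEX i, hEY i, zero_mul, zero_mul, add_zero]
  -- diagonal second moments
  have hdiagid : ∀ i ω, X i ω * X i ω + Y i ω * Y i ω = 1 + c ^ 2 - 2 * c * Real.cos (Δ i ω) := by
    intro i ω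
    have h2 : X i ω ^ 2 + Y i ω ^ 2 = 1 + c ^ 2 - 2 * c * Real.cos (Δ i ω) :=
      aop_diag c (θ i ω) (Δ i ω)
    calc X i ω * X i ω + Y i ω * Y i ω = X i ω ^ 2 + Y i ω ^ 2 := by ring
      _ = _ := h2
  have hdiag : ∀ i, ∫ ω, (X i ω * X i ω + Y i ω * Y i ω) ∂ℙ
      = 1 + c ^ 2 - 2 * c * ∫ ω, Real.cos (Δ 1 ω) ∂ℙ := by
    intro i
    rw [integral_congr_ae (ae_of_all _ (hdiagid i))]
    have isplit : ∫ ω, (1 + c ^ 2 - 2 * c * Real.cos (Δ i ω)) ∂ℙ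
        = (∫ _ : Ω, (1 + c ^ 2) ∂ℙ) - ∫ ω, 2 * c * Real.cos (Δ i ω) ∂ℙ :=
      integral_sub (integrable_const _) ((icosΔ i).const_mul (2 * c))
    rw [isplit, integral_const_mul, hΔcos1 i, integral_const]
    simp [measure_univ]
  -- pointwise expansion of the quadratic form
  have hmain : ∀ ω, ((err ω).1 + ∑ i ∈ s, v * δ i * Real.cos (θ i ω)
          - c * ∑ i ∈ s, v * δ i * Real.cos (θ i ω + Δ i ω)) ^ 2
        + ((err ω).2 + ∑ i ∈ s, v * δ i * Real.sin (θ i ω)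
          - c * ∑ i ∈ s, v * δ i * Real.sin (θ i ω + Δ i ω)) ^ 2
      = ((err ω).1 ^ 2 + (err ω).2 ^ 2)
        + (∑ i ∈ s, ∑ j ∈ s, (a i * a j) * (X i ω * X j ω + Y i ω * Y j ω))
        + (∑ i ∈ s, (2 * a i) * (X i ω * A ω + Y i ω * B ω)) := by
    intro ω
    have e1 : ∑ i ∈ s, a i * X i ω
        = ∑ i ∈ s, v * δ i * Real.cos (θ i ω)
          - c * ∑ i ∈ s, v * δ i * Real.cos (θ i ω + Δ i ω) := by
      rw [Finset.mul_sum, ← Finset.sum_sub_distrib]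
      exact Finset.sum_congr rfl fun i _ => by simp only [ha, hX]; ring
    have e2 : ∑ i ∈ s, a i * Y i ω
        = ∑ i ∈ s, v * δ i * Real.sin (θ i ω)
          - c * ∑ i ∈ s, v * δ i * Real.sin (θ i ω + Δ i ω) := by
      rw [Finset.mul_sum, ← Finset.sum_sub_distrib]
      exact Finset.sum_congr rfl fun i _ => by simp only [ha, hY]; ring
    have key : ((err ω).1 + ∑ i ∈ s, a i * X i ω) ^ 2
          + ((err ω).2 + ∑ i ∈ s, a i * Y i ω) ^ 2
        = ((err ω).1 ^ 2 + (err ω).2 ^ 2)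
          + (∑ i ∈ s, ∑ j ∈ s, (a i * a j) * (X i ω * X j ω + Y i ω * Y j ω))
          + (∑ i ∈ s, (2 * a i) * (X i ω * A ω + Y i ω * B ω)) :=
      aop_expand ((err ω).1) ((err ω).2) s a (fun i => X i ω) (fun i => Y i ω)
    rw [add_sub_assoc, add_sub_assoc, ← e1, ← e2]
    exact key
  -- integrability of the expanded pieces
  have iDD : ∀ i j, Integrable
      (fun ω => (a i * a j) * (X i ω * X j ω + Y i ω * Y j ω)) ℙ := fun i j =>
    ((iXX i j).add (iYY i j)).const_mul _
  have I2 : Integrable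
      (fun ω => ∑ i ∈ s, ∑ j ∈ s, (a i * a j) * (X i ω * X j ω + Y i ω * Y j ω)) ℙ :=
    integrable_finset_sum _ fun i _ => integrable_finset_sum _ fun j _ => iDD i j
  have iC : ∀ i, Integrable (fun ω => (2 * a i) * (X i ω * A ω + Y i ω * B ω)) ℙ := fun i =>
    ((iXA i).add (iYB i)).const_mul _
  have I3 : Integrable (fun ω => ∑ i ∈ s, (2 * a i) * (X i ω * A ω + Y i ω * B ω)) ℙ :=
    integrable_finset_sum _ fun i _ => iC i
  -- assemble
  rw [integral_congr_ae (ae_of_all _ hmain)]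
  have split1 : ∫ ω, (((err ω).1 ^ 2 + (err ω).2 ^ 2)
        + (∑ i ∈ s, ∑ j ∈ s, (a i * a j) * (X i ω * X j ω + Y i ω * Y j ω))
        + (∑ i ∈ s, (2 * a i) * (X i ω * A ω + Y i ω * B ω))) ∂ℙ
      = (∫ ω, ((err ω).1 ^ 2 + (err ω).2 ^ 2) ∂ℙ)
        + (∫ ω, (∑ i ∈ s, ∑ j ∈ s, (a i * a j) * (X i ω * X j ω + Y i ω * Y j ω)) ∂ℙ)
        + ∫ ω, (∑ i ∈ s, (2 * a i) * (X i ω * A ω + Y i ω * B ω)) ∂ℙ := by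
    have t1 : ∫ ω, ((((err ω).1 ^ 2 + (err ω).2 ^ 2)
          + (∑ i ∈ s, ∑ j ∈ s, (a i * a j) * (X i ω * X j ω + Y i ω * Y j ω)))
          + (∑ i ∈ s, (2 * a i) * (X i ω * A ω + Y i ω * B ω))) ∂ℙ
        = (∫ ω, (((err ω).1 ^ 2 + (err ω).2 ^ 2)
            + (∑ i ∈ s, ∑ j ∈ s, (a i * a j) * (X i ω * X j ω + Y i ω * Y j ω))) ∂ℙ)
          + ∫ ω, (∑ i ∈ s, (2 * a i) * (X i ω * A ω + Y i ω * B ω)) ∂ℙ :=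
      integral_add (hint.add I2) I3
    have t2 : ∫ ω, (((err ω).1 ^ 2 + (err ω).2 ^ 2)
          + (∑ i ∈ s, ∑ j ∈ s, (a i * a j) * (X i ω * X j ω + Y i ω * Y j ω))) ∂ℙ
        = (∫ ω, ((err ω).1 ^ 2 + (err ω).2 ^ 2) ∂ℙ)
          + ∫ ω, (∑ i ∈ s, ∑ j ∈ s, (a i * a j) * (X i ω * X j ω + Y i ω * Y j ω)) ∂ℙ :=
      integral_add hint I2
    rw [t1, t2]
  rw [split1]
  have hD : ∫ ω, (∑ i ∈ s, ∑ j ∈ s, (a i * a j) * (X i ω * X j ω + Y i ω * Y j ω)) ∂ℙ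
      = (1 + c ^ 2 - 2 * c * ∫ ω, Real.cos (Δ 1 ω) ∂ℙ) * ∑ i ∈ s, v ^ 2 * δ i ^ 2 := by
    rw [integral_finset_sum _ fun i _ => integrable_finset_sum _ fun j _ => iDD i j]
    have step : ∀ i ∈ s, ∫ ω, (∑ j ∈ s, (a i * a j) * (X i ω * X j ω + Y i ω * Y j ω)) ∂ℙ
        = (v ^ 2 * δ i ^ 2) * (1 + c ^ 2 - 2 * c * ∫ ω, Real.cos (Δ 1 ω) ∂ℙ) := by
      intro i hi
      rw [integral_finset_sum _ fun j _ => iDD i j]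
      have stepj : ∀ j ∈ s, ∫ ω, (a i * a j) * (X i ω * X j ω + Y i ω * Y j ω) ∂ℙ
          = (a i * a j) * ∫ ω, (X i ω * X j ω + Y i ω * Y j ω) ∂ℙ := fun j _ =>
        integral_const_mul _ _
      rw [Finset.sum_congr rfl stepj, Finset.sum_eq_single_of_mem i hi]
      · rw [hdiag i]; simp only [ha]; ring
      · intro j hj hji
        rw [hoff i j (Ne.symm hji), mul_zero]
    rw [Finset.sum_congr rfl step, ← Finset.sum_mul, mul_comm]
  have hC : ∫ ω, (∑ i ∈ s, (2 * a i) * (X i ω * A ω + Y i ω * B ω)) ∂ℙ = 0 := by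
    rw [integral_finset_sum _ fun i _ => iC i]
    refine Finset.sum_eq_zero fun i _ => ?_
    rw [integral_const_mul, hcross i, mul_zero]
  rw [hD, hC, add_zero]
end
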